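/- arXiv:1302.4214 — 4 statements merged into one kernel-verified Lean document; each statement's English description precedes it below -/
import Mathlib

section
/- For every d-regular graph G, we have f(G) ≤ b(G), where f(G) is the f-chromatic vertex number of G. -/
/-!
Start from a proper coloring in which some colors have a dominant vertex. As long as some color
class has no dominant vertex, each of its vertices misses another color in its neighborhood; give
it that color and discard the emptied class. The coloring stays proper, and a vertex that was
dominant stays dominant with respect to the remaining colors. The process ends in a b-coloring
with at least as many colors as the original coloring had colors with a dominant vertex.
-/

open SimpleGraph

variable {V : Type*} [Fintype V] [DecidableEq V]

/-- In a proper coloring `c` with `k` colors, a vertex is dominant if it has a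
neighbor in every color class other than its own. -/
def IsDominant {k : ℕ} (G : SimpleGraph V) (c : V → Fin k) (v : V) : Prop :=
  ∀ j : Fin k, j ≠ c v → ∃ u, G.Adj v u ∧ c u = j

/-- `c` is a proper coloring. -/
def ProperColoring {k : ℕ} (G : SimpleGraph V) (c : V → Fin k) : Prop :=
  ∀ u v, G.Adj u v → c u ≠ c v

/-- A b-coloring: proper, and every color class contains a dominant vertex. -/
def IsBColoring {k : ℕ} (G : SimpleGraph V) (c : V → Fin k) : Prop :=
  ProperColoring G c ∧ ∀ j : Fin k, ∃ v, c v = j ∧ IsDominant G c v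

/-- The b-chromatic number: largest `k` admitting a b-coloring with `k` colors. -/
noncomputable def bNum (G : SimpleGraph V) : ℕ :=
  sSup {k | ∃ c : V → Fin k, IsBColoring G c}

/-- Number of colors possessing a dominant vertex in the coloring `c`. -/
noncomputable def domColors {k : ℕ} (G : SimpleGraph V) (c : V → Fin k) : ℕ :=
  Nat.card {j : Fin k // ∃ v, c v = j ∧ IsDominant G c v}

/-- The f-chromatic vertex number of a d-regular graph: the maximum number of
colors having a dominant vertex, over proper (d+1)-colorings. -/
noncomputable def fNum (G : SimpleGraph V) (d : ℕ) : ℕ :=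
  sSup {m | ∃ c : V → Fin (d+1), ProperColoring G c ∧ m = domColors G c}

/-- `G` contains no cycle of length `n`. -/
def NoCycleOfLength (G : SimpleGraph V) (n : ℕ) : Prop :=
  ∀ (v : V) (w : G.Walk v v), w.IsCycle → w.length ≠ n

/-- `⌈n/2⌉` for a natural number `n`. -/
def ceilHalf (n : ℕ) : ℕ := (n + 1) / 2

section

variable {W : Type*} {G : SimpleGraph W} {k : ℕ}

def IsDominantOn (G : SimpleGraph W) (T : Finset (Fin k)) (c : W → Fin k) (v : W) : Prop :=
  ∀ j ∈ T, j ≠ c v → ∃ u, G.Adj v u ∧ c u = j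

theorem isDominantOn_univ_iff {c : W → Fin k} {v : W} :
    IsDominantOn G Finset.univ c v ↔ IsDominant G c v := by
  simp [IsDominantOn, IsDominant]

theorem exists_isBColoring_of_forall_isDominantOn {T : Finset (Fin k)} {c : W → Fin k}
    (hT : ∀ v, c v ∈ T) (hc : ProperColoring G c)
    (hdom : ∀ j ∈ T, ∃ v, c v = j ∧ IsDominantOn G T c v) :
    ∃ c' : W → Fin T.card, IsBColoring G c' := by
  let e := T.equivFin
  have he : ∀ v (j : T), e ⟨c v, hT v⟩ = e j ↔ c v = j := fun v j =>
    e.apply_eq_iff_eq.trans Subtype.ext_iff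
  refine ⟨fun v => e ⟨c v, hT v⟩, fun u v huv h => hc u v huv ((he u _).1 h), fun j' => ?_⟩
  obtain ⟨⟨j, hj⟩, rfl⟩ := e.surjective j'
  obtain ⟨v, rfl, hv⟩ := hdom j hj
  refine ⟨v, rfl, fun i' hne => ?_⟩
  obtain ⟨⟨i, hi⟩, rfl⟩ := e.surjective i'
  obtain ⟨u, hvu, rfl⟩ := hv i hi fun h => hne (by simp [h])
  exact ⟨u, hvu, rfl⟩

theorem exists_recoloring_erase {T : Finset (Fin k)} {c : W → Fin k} {j : Fin k}
    (hT : ∀ v, c v ∈ T) (hc : ProperColoring G c) (hj : ∀ v, c v = j → ¬ IsDominantOn G T c v) :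
    ∃ c' : W → Fin k, (∀ v, c' v ∈ T.erase j) ∧ ProperColoring G c' ∧
      ∀ v, c v ≠ j → c' v = c v := by
  have hmiss : ∀ v, c v = j → ∃ i ∈ T, i ≠ j ∧ ∀ u, G.Adj v u → c u ≠ i := by
    intro v hv
    simpa [IsDominantOn, hv] using hj v hv
  choose f hfT hfj hfmiss using hmiss
  refine ⟨fun v => if hv : c v = j then f v hv else c v, fun v => ?_, fun u v huv => ?_,
    fun v hv => dif_neg hv⟩
  · beta_reduce
    split_ifs with hv
    · exact Finset.mem_erase.2 ⟨hfj v hv, hfT v hv⟩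
    · exact Finset.mem_erase.2 ⟨hv, hT v⟩
  · have hne := hc u v huv
    beta_reduce
    split_ifs with hu hv hv
    · exact absurd (hu.trans hv.symm) hne
    · exact (hfmiss u hu v huv).symm
    · exact hfmiss v hv u huv.symm
    · exact hne

theorem IsDominantOn.erase {T : Finset (Fin k)} {c c' : W → Fin k} {j : Fin k} {v : W}
    (hv : IsDominantOn G T c v) (hvj : c v ≠ j) (hcc' : ∀ u, c u ≠ j → c' u = c u) :
    IsDominantOn G (T.erase j) c' v := by
  intro i hi hne
  obtain ⟨hij, hiT⟩ := Finset.mem_erase.1 hi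
  rw [hcc' v hvj] at hne
  obtain ⟨u, hvu, rfl⟩ := hv i hiT hne
  exact ⟨u, hvu, hcc' u hij⟩

theorem image_isDominantOn_subset_erase {T : Finset (Fin k)} {c c' : W → Fin k} {j : Fin k}
    (hj : ∀ v, c v = j → ¬ IsDominantOn G T c v) (hcc' : ∀ u, c u ≠ j → c' u = c u) :
    c '' {v | IsDominantOn G T c v} ⊆ c' '' {v | IsDominantOn G (T.erase j) c' v} := by
  rintro _ ⟨v, hv, rfl⟩
  have hvj : c v ≠ j := fun h => hj v h hv
  exact ⟨v, hv.erase hvj hcc', hcc' v hvj⟩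

theorem exists_isBColoring_ncard_le (T : Finset (Fin k)) {c : W → Fin k}
    (hT : ∀ v, c v ∈ T) (hc : ProperColoring G c) :
    ∃ (m : ℕ) (b : W → Fin m), IsBColoring G b ∧
      (c '' {v | IsDominantOn G T c v}).ncard ≤ m := by
  induction T using Finset.strongInduction generalizing c with
  | H T ih =>
    by_cases hdom : ∀ j ∈ T, ∃ v, c v = j ∧ IsDominantOn G T c v
    · obtain ⟨b, hb⟩ := exists_isBColoring_of_forall_isDominantOn hT hc hdom
      refine ⟨T.card, b, hb, ?_⟩
      rw [← Set.ncard_coe_finset]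
      exact Set.ncard_le_ncard (by rintro _ ⟨v, -, rfl⟩; exact hT v)
    · push Not at hdom
      obtain ⟨j, hjT, hj⟩ := hdom
      obtain ⟨c', hc'T, hc', hcc'⟩ := exists_recoloring_erase hT hc hj
      obtain ⟨m, b, hb, hle⟩ := ih _ (Finset.erase_ssubset hjT) hc'T hc'
      exact ⟨m, b, hb, (Set.ncard_le_ncard (image_isDominantOn_subset_erase hj hcc')).trans hle⟩

theorem IsBColoring.le_card [Fintype W] {c : W → Fin k} (hc : IsBColoring G c) :
    k ≤ Fintype.card W := by
  simpa using Fintype.card_le_of_surjective c fun j => (hc.2 j).imp fun _ => And.left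

theorem domColors_le_bNum [Fintype W] {c : W → Fin k} (hc : ProperColoring G c) :
    domColors G c ≤ bNum G := by
  obtain ⟨m, b, hb, hle⟩ := exists_isBColoring_ncard_le Finset.univ (fun _ => Finset.mem_univ _) hc
  have hcount : domColors G c = (c '' {v | IsDominantOn G Finset.univ c v}).ncard := by
    have himage : c '' {v | IsDominantOn G Finset.univ c v} =
        {j | ∃ v, c v = j ∧ IsDominant G c v} := by
      ext j
      simp [isDominantOn_univ_iff, and_comm]
    rw [himage]
    rfl
  have hbdd : BddAbove {k | ∃ b : W → Fin k, IsBColoring G b} := ⟨_, fun _ ⟨_, hb⟩ => hb.le_card⟩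
  exact hcount ▸ hle.trans (le_csSup hbdd ⟨b, hb⟩)

end

theorem fNum_le_bNum_general (G : SimpleGraph V) (d : ℕ) :
    fNum G d ≤ bNum G :=
  csSup_le' <| by
    rintro m ⟨c, hc, rfl⟩
    exact domColors_le_bNum hc

theorem fNum_le_bNum (G : SimpleGraph V) (d : ℕ)
    [DecidableRel G.Adj] (hreg : G.IsRegularOfDegree d) :
    fNum G d ≤ bNum G :=
  fNum_le_bNum_general G d
end

section
/- For every d-regular graph G, a proper coloring of G with d+1 colors in which every color class contains a dominant vertex exists if and only if f(G) = d + 1; in particular, if f(G) = d + 1 then b(G) = d + 1. -/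
open SimpleGraph

variable {V : Type*} [Fintype V] [DecidableEq V]

/-! A proper `k`-colouring has `k` colours with a dominant vertex exactly when it is a
b-colouring, and `k` bounds that count, so the supremum `fNum G d` reaches `d + 1` only at a
b-colouring. No b-colouring of a `d`-regular graph uses more than `d + 1` colours: the closed
neighbourhood of a dominant vertex has `d + 1` vertices and meets every colour class. -/

section

variable {W : Type*} {k : ℕ} {G : SimpleGraph W} {c : W → Fin k}

lemma Nat.sSup_eq_iff_mem_of_forall_le {S : Set ℕ} {n : ℕ} (hn : n ≠ 0)
    (hle : ∀ m ∈ S, m ≤ n) : sSup S = n ↔ n ∈ S := by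
  refine ⟨fun h => ?_, fun h => IsGreatest.csSup_eq ⟨h, hle⟩⟩
  obtain rfl | hS := S.eq_empty_or_nonempty
  · exact absurd (h.symm.trans csSup_empty) hn
  · exact h ▸ Nat.sSup_mem hS ⟨n, hle⟩

lemma domColors_le (G : SimpleGraph W) (c : W → Fin k) : domColors G c ≤ k :=
  (Finite.card_subtype_le _).trans_eq (Nat.card_fin k)

lemma domColors_eq_iff :
    domColors G c = k ↔ ∀ j : Fin k, ∃ v, c v = j ∧ IsDominant G c v := by
  refine ⟨fun h j => ?_, fun h => ?_⟩
  · by_contra hj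
    have hlt := Finite.card_subtype_lt (p := fun j => ∃ v, c v = j ∧ IsDominant G c v) hj
    exact hlt.ne (h.trans (Nat.card_fin k).symm)
  · rw [domColors, Nat.card_congr (Equiv.subtypeUnivEquiv h), Nat.card_fin]

lemma isBColoring_iff_domColors_eq :
    IsBColoring G c ↔ ProperColoring G c ∧ domColors G c = k := by
  rw [domColors_eq_iff, IsBColoring]

lemma IsDominant.le_degree_add_one {v : W} [Fintype (G.neighborSet v)]
    (hv : IsDominant G c v) : k ≤ G.degree v + 1 := by
  classical
  have hcover : (Finset.univ : Finset (Fin k)) ⊆ (insert v (G.neighborFinset v)).image c := by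
    intro j _
    by_cases hj : j = c v
    · exact Finset.mem_image.2 ⟨v, Finset.mem_insert_self _ _, hj.symm⟩
    · obtain ⟨u, hvu, rfl⟩ := hv j hj
      exact Finset.mem_image.2
        ⟨u, Finset.mem_insert_of_mem ((G.mem_neighborFinset v u).2 hvu), rfl⟩
  calc k = (Finset.univ : Finset (Fin k)).card := (Finset.card_fin k).symm
    _ ≤ ((insert v (G.neighborFinset v)).image c).card := Finset.card_le_card hcover
    _ ≤ (insert v (G.neighborFinset v)).card := Finset.card_image_le
    _ ≤ G.degree v + 1 := by
      rw [← G.card_neighborFinset_eq_degree]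
      exact Finset.card_insert_le _ _

lemma IsBColoring.le_of_isRegularOfDegree [G.LocallyFinite] {d : ℕ}
    (hreg : G.IsRegularOfDegree d) (hc : IsBColoring G c) : k ≤ d + 1 := by
  rcases k.eq_zero_or_pos with rfl | hk
  · exact Nat.zero_le _
  · obtain ⟨v, -, hv⟩ := hc.2 ⟨0, hk⟩
    exact hreg v ▸ hv.le_degree_add_one

lemma fNum_eq_iff (G : SimpleGraph W) (d : ℕ) :
    fNum G d = d + 1 ↔ ∃ c : W → Fin (d + 1), IsBColoring G c := by
  rw [fNum, Nat.sSup_eq_iff_mem_of_forall_le d.succ_ne_zero]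
  · simp only [isBColoring_iff_domColors_eq, Set.mem_ofPred_eq, eq_comm]
  · rintro m ⟨c, -, rfl⟩
    exact domColors_le G c

lemma bNum_eq_of_isBColoring [G.LocallyFinite] {d : ℕ} (hreg : G.IsRegularOfDegree d)
    {c : W → Fin (d + 1)} (hc : IsBColoring G c) : bNum G = d + 1 :=
  IsGreatest.csSup_eq ⟨⟨c, hc⟩, fun _ ⟨_, hc'⟩ => hc'.le_of_isRegularOfDegree hreg⟩

end

theorem bColoring_iff_fNum_eq (G : SimpleGraph V) (d : ℕ) [DecidableRel G.Adj]
    (hreg : G.IsRegularOfDegree d) :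
    ((∃ c : V → Fin (d + 1), IsBColoring G c) ↔ fNum G d = d + 1) ∧
      (fNum G d = d + 1 → bNum G = d + 1) := by
  refine ⟨(fNum_eq_iff G d).symm, fun hf => ?_⟩
  obtain ⟨c, hc⟩ := (fNum_eq_iff G d).1 hf
  exact bNum_eq_of_isBColoring hreg hc
end

section
/- Let G be a d-regular graph with girth 5. Then the vertices of G can be properly colored with d+1 colors in such a way that there exists a vertex x of G such that x and ⌈(d-1)/2⌉ + 1 of its neighbors are all dominant vertices of pairwise distinct colors. -/
open SimpleGraph

variable {V : Type*} [Fintype V] [DecidableEq V]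

/-!
Colour the closed neighbourhood `N[x]` of a vertex `x` injectively and then treat
`t = ⌊d/2⌋ + 1` neighbours `v` of `x` one at a time, colouring `A = N(v) \ {x}` bijectively
with the `d - 1` colours other than `c x` and `c v`, avoiding the colours of the neighbours
coloured before. Girth `5` makes these sets `A` disjoint and gives every `u ∈ A` at most one
neighbour in each earlier `N[w]`. So when `k` neighbours are done, each `u ∈ A` has at most `k`
forbidden colours, and each colour is forbidden on at most `k` vertices of `A`, and on at most
`k - 1` if it is the colour of one of the `k` neighbours done. Because `2k ≤ d`, this is
enough for Hall's condition. A greedy extension to all of `G` keeps these colours, and a vertex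
whose closed neighbourhood (of size `d + 1`) is rainbow is dominant.
-/

open Finset

/-- A set `S` violating Hall's condition has `#S ≤ k` (a colour of `P` missing from its
neighbourhood `N` is forbidden on all of `S`) and `#S > #N ≥ #P - k ≥ k - 1`, so `#S = k`;
but then every colour of `K` lies in `N`, whence `#N ≥ k`. -/
theorem exists_injective_mem_sdiff_of_card_filter_le {ι α : Type*} [DecidableEq α]
    (A : Finset ι) (P K : Finset α) (F : ι → Finset α) (k : ℕ)
    (hAP : #A ≤ #P) (hk : 2 * k ≤ #P + 1) (hKP : K ⊆ P) (hK : k ≤ #K)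
    (hF : ∀ u ∈ A, #(P ∩ F u) ≤ k)
    (hP : ∀ q ∈ P, #{u ∈ A | q ∈ F u} ≤ k)
    (hKF : ∀ q ∈ K, #{u ∈ A | q ∈ F u} < k) :
    ∃ f : A → α, Function.Injective f ∧ ∀ u : A, f u ∈ P \ F u := by
  refine (all_card_le_biUnion_card_iff_exists_injective _).mp fun S => ?_
  by_contra! hS
  set N := S.biUnion fun u => P \ F u
  have hmissing : ∀ q ∈ P, q ∉ N → #S ≤ #{u ∈ A | q ∈ F u} := by
    intro q hqP hqN
    rw [← card_map (Function.Embedding.subtype _)]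
    refine card_le_card fun u hu => ?_
    obtain ⟨u, huS, rfl⟩ := mem_map.mp hu
    have : q ∉ P \ F u := fun h => hqN (mem_biUnion.mpr ⟨u, huS, h⟩)
    exact mem_filter.mpr ⟨u.2, by simpa [hqP] using this⟩
  obtain ⟨u₀, hu₀⟩ : S.Nonempty := card_pos.mp (by omega)
  have hN : #P - k ≤ #N := calc
    #P - k ≤ #(P \ F u₀) := by
      have := card_sdiff_add_card_inter P (F u₀)
      have := hF u₀ u₀.2
      omega
    _ ≤ #N := card_le_card (subset_biUnion_of_mem (fun u : A => P \ F u) hu₀)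
  have hSA : #S ≤ #A := (card_le_univ S).trans (Fintype.card_coe A).le
  obtain ⟨q, hqP, hqN⟩ := exists_mem_notMem_of_card_lt_card (s := N) (t := P) (by omega)
  have hSk : #S ≤ k := (hmissing q hqP hqN).trans (hP q hqP)
  have hKN : K ⊆ N := fun q hq => by_contra fun hqN =>
    absurd ((hmissing q (hKP hq) hqN).trans_lt (hKF q hq)) (by omega)
  have := card_le_card hKN
  omega

section ProperOn

variable {α : Type*} {G : SimpleGraph α} {k : ℕ} {c c' : α → Fin k} {s t : Finset α}

def ProperOn (G : SimpleGraph α) (c : α → Fin k) (s : Finset α) : Prop :=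
  ∀ a ∈ s, ∀ b ∈ s, G.Adj a b → c a ≠ c b

theorem properOn_of_injOn (h : Set.InjOn c s) : ProperOn G c s :=
  fun _ ha _ hb hab => h.ne ha hb hab.ne

theorem ProperOn.congr (h : ProperOn G c s) (heq : Set.EqOn c c' s) : ProperOn G c' s :=
  fun a ha b hb hab => heq ha ▸ heq hb ▸ h a ha b hb hab

theorem ProperOn.union [DecidableEq α] (hs : ProperOn G c s) (ht : ProperOn G c t)
    (hst : ∀ a ∈ s, ∀ b ∈ t, G.Adj a b → c a ≠ c b) : ProperOn G c (s ∪ t) := by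
  intro a ha b hb hab
  rcases mem_union.mp ha with ha | ha <;> rcases mem_union.mp hb with hb | hb
  · exact hs a ha b hb hab
  · exact hst a ha b hb hab
  · exact (hst b hb a ha hab.symm).symm
  · exact ht a ha b hb hab

theorem ProperOn.insert_update [DecidableEq α] (h : ProperOn G c s) {a : α} {q : Fin k}
    (hq : ∀ b, G.Adj a b → q ≠ c b) : ProperOn G (Function.update c a q) (insert a s) := by
  intro b hb b' hb' hbb'
  rcases eq_or_ne b a with rfl | hba <;> rcases eq_or_ne b' b with rfl | hb'b
  · exact (G.irrefl hbb').elim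
  · simpa [Function.update_of_ne hb'b] using hq b' hbb'
  · exact (G.irrefl hbb').elim
  rcases eq_or_ne b' a with rfl | hb'a
  · simpa [Function.update_of_ne hba] using (hq b hbb'.symm).symm
  simpa [Function.update_of_ne hba, Function.update_of_ne hb'a] using
    h b ((mem_insert.mp hb).resolve_left hba) b' ((mem_insert.mp hb').resolve_left hb'a) hbb'

end ProperOn

theorem exists_properColoring_eqOn {G : SimpleGraph V} [DecidableRel G.Adj] {k : ℕ}
    (hdeg : ∀ v, G.degree v < k) {c : V → Fin k} {s : Finset V} (hc : ProperOn G c s) :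
    ∃ c' : V → Fin k, ProperColoring G c' ∧ Set.EqOn c' c s := by
  suffices ∀ t : Finset V, ∃ c' : V → Fin k, ProperOn G c' (s ∪ t) ∧ Set.EqOn c' c s by
    obtain ⟨c', hc', heq⟩ := this univ
    exact ⟨c', fun a b hab => hc' a (by simp) b (by simp) hab, heq⟩
  intro t
  induction t using Finset.induction_on with
  | empty => exact ⟨c, by simpa using hc, fun _ _ => rfl⟩
  | insert a t _ ih =>
    obtain ⟨c', hc', heq⟩ := ih
    by_cases ha : a ∈ s
    · exact ⟨c', by rwa [union_insert, insert_eq_of_mem (mem_union_left _ ha)], heq⟩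
    obtain ⟨q, -, hq⟩ := exists_mem_notMem_of_card_lt_card (s := (G.neighborFinset a).image c')
      (t := univ) (by simpa using card_image_le.trans_lt (hdeg a))
    have hq : ∀ b, G.Adj a b → q ≠ c' b := fun b hab hqb =>
      hq (mem_image.mpr ⟨b, (G.mem_neighborFinset a b).mpr hab, hqb.symm⟩)
    refine ⟨Function.update c' a q, by simpa [union_insert] using hc'.insert_update hq, ?_⟩
    intro w hw
    rw [Function.update_of_ne (ne_of_mem_of_not_mem hw ha)]
    exact heq hw

namespace SimpleGraph

theorem not_adj_of_adj_of_adj {α : Type*} {G : SimpleGraph α} (hg : 4 ≤ G.egirth) {a b c : α}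
    (hab : G.Adj a b) (hbc : G.Adj b c) : ¬ G.Adj c a := by
  intro hca
  have := hab.ne; have := hbc.ne; have := hca.ne
  have hcyc : (Walk.cons hab (Walk.cons hbc (Walk.cons hca Walk.nil))).IsCycle :=
    { edges_nodup := by aesop
      ne_nil := by aesop
      support_nodup := by aesop }
  have := le_egirth.mp hg _ _ hcyc
  norm_num at this

theorem commonNeighbors_subsingleton {α : Type*} {G : SimpleGraph α} (hg : 5 ≤ G.egirth)
    {a c : α} (hac : a ≠ c) : (G.commonNeighbors a c).Subsingleton := by
  intro b hb e he
  rw [mem_commonNeighbors] at hb he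
  by_contra hbe
  have := hb.1.ne; have := hb.2.ne; have := he.1.ne; have := he.2.ne
  have hcyc : (Walk.cons hb.1 (Walk.cons hb.2.symm (Walk.cons he.2 (Walk.cons he.1.symm
      Walk.nil)))).IsCycle :=
    { edges_nodup := by aesop
      ne_nil := by aesop
      support_nodup := by aesop }
  have := le_egirth.mp hg _ _ hcyc
  norm_num at this

variable {G : SimpleGraph V} [DecidableRel G.Adj] {d : ℕ}

def closedNbhd (G : SimpleGraph V) [DecidableRel G.Adj] (v : V) : Finset V :=
  insert v (G.neighborFinset v)

@[simp]
theorem mem_closedNbhd {v w : V} : w ∈ G.closedNbhd v ↔ w = v ∨ G.Adj v w := by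
  simp [closedNbhd]

theorem self_mem_closedNbhd (v : V) : v ∈ G.closedNbhd v := mem_insert_self _ _

theorem card_closedNbhd (hreg : G.IsRegularOfDegree d) (v : V) :
    #(G.closedNbhd v) = d + 1 := by
  rw [closedNbhd, card_insert_of_notMem (by simp), card_neighborFinset_eq_degree, hreg v]

theorem card_neighborFinset_inter_closedNbhd_le_one (hg : 5 ≤ G.egirth) {u v : V} (huv : u ≠ v) :
    #(G.neighborFinset u ∩ G.closedNbhd v) ≤ 1 := by
  rw [card_le_one]
  simp only [mem_inter, mem_neighborFinset, mem_closedNbhd]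
  have hg4 : 4 ≤ G.egirth := le_trans (by norm_num) hg
  rintro a ⟨hua, rfl | hva⟩ b ⟨hub, rfl | hvb⟩
  · rfl
  · exact absurd hub.symm (not_adj_of_adj_of_adj hg4 hua hvb)
  · exact absurd hua.symm (not_adj_of_adj_of_adj hg4 hub hva)
  · exact commonNeighbors_subsingleton hg huv ⟨hua, hva⟩ ⟨hub, hvb⟩

theorem insert_subset_closedNbhd {x : V} {R : Finset V} (hR : R ⊆ G.neighborFinset x) :
    insert x R ⊆ G.closedNbhd x :=
  insert_subset_insert x hR

theorem isDominant_of_injOn_closedNbhd (hreg : G.IsRegularOfDegree d) {c : V → Fin (d + 1)}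
    {v : V} (hc : Set.InjOn c (G.closedNbhd v)) : IsDominant G c v := by
  have himage : (G.closedNbhd v).image c = univ :=
    eq_univ_of_card _ (by rw [card_image_of_injOn hc, card_closedNbhd hreg, Fintype.card_fin])
  intro j hj
  obtain ⟨w, hw, rfl⟩ := mem_image.mp (himage ▸ mem_univ j)
  rcases mem_closedNbhd.mp hw with rfl | hvw
  · exact absurd rfl hj
  · exact ⟨w, hvw, rfl⟩

/-- Only the values of `c` on `S.biUnion G.closedNbhd` matter; elsewhere `c` is arbitrary. -/
def IsRainbowAround {k : ℕ} (G : SimpleGraph V) [DecidableRel G.Adj] (c : V → Fin k)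
    (S : Finset V) : Prop :=
  (∀ v ∈ S, Set.InjOn c (G.closedNbhd v)) ∧ ProperOn G c (S.biUnion G.closedNbhd)

theorem exists_isRainbowAround_singleton (hreg : G.IsRegularOfDegree d) (x : V) :
    ∃ c : V → Fin (d + 1), IsRainbowAround G c {x} := by
  let e : G.closedNbhd x ≃ Fin (d + 1) :=
    Fintype.equivFinOfCardEq (by rw [Fintype.card_coe, card_closedNbhd hreg])
  have hinj : Set.InjOn (fun w => if h : w ∈ G.closedNbhd x then e ⟨w, h⟩ else 0)
      (G.closedNbhd x) := by
    intro a ha b hb hab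
    simp only [mem_coe] at ha hb
    simp only [dif_pos ha, dif_pos hb, e.apply_eq_iff_eq, Subtype.mk.injEq] at hab
    exact hab
  exact ⟨_, by simpa using hinj, by simpa using properOn_of_injOn hinj⟩

theorem IsRainbowAround.insert_of_eqOn {k : ℕ} {c c' : V → Fin k} {S : Finset V} {v : V}
    (hc : IsRainbowAround G c S) (heq : Set.EqOn c' c (S.biUnion G.closedNbhd))
    (hv : Set.InjOn c' (G.closedNbhd v))
    (hcross : ∀ a ∈ G.closedNbhd v, a ∉ S.biUnion G.closedNbhd →
      ∀ b ∈ S.biUnion G.closedNbhd, G.Adj a b → c' a ≠ c' b) :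
    IsRainbowAround G c' (insert v S) := by
  have hD : ProperOn G c' (S.biUnion G.closedNbhd) := hc.2.congr heq.symm
  refine ⟨fun w hw => ?_, ?_⟩
  · rcases mem_insert.mp hw with rfl | hw
    · exact hv
    · exact (hc.1 w hw).congr (heq.symm.mono (coe_subset.mpr (subset_biUnion_of_mem _ hw)))
  · rw [biUnion_insert]
    refine (properOn_of_injOn hv).union hD fun a ha b hb hab => ?_
    by_cases haD : a ∈ S.biUnion G.closedNbhd
    · exact hD a haD b hb hab
    · exact hcross a ha haD b hb hab

theorem IsRainbowAround.exists_properColoring {c : V → Fin (d + 1)} {S : Finset V}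
    (hreg : G.IsRegularOfDegree d) (hc : IsRainbowAround G c S) :
    ∃ c' : V → Fin (d + 1), ProperColoring G c' ∧ ∀ v ∈ S, Set.InjOn c' (G.closedNbhd v) := by
  obtain ⟨c', hc', heq⟩ := exists_properColoring_eqOn (fun v => (hreg v).symm ▸ d.lt_succ_self) hc.2
  exact ⟨c', hc', fun v hv =>
    (hc.1 v hv).congr (heq.symm.mono (coe_subset.mpr (subset_biUnion_of_mem _ hv)))⟩

section Step

variable {x v : V} {R : Finset V}

theorem eq_of_adj_of_mem_closedNbhd (hg : 5 ≤ G.egirth) {u w : V} (hxv : G.Adj x v)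
    (hvu : G.Adj v u) (hux : u ≠ x) (huw : G.Adj u w) (hw : w ∈ G.closedNbhd x) : w = v :=
  card_le_one.mp (card_neighborFinset_inter_closedNbhd_le_one hg hux) w
    (mem_inter.mpr ⟨(G.mem_neighborFinset u w).mpr huw, hw⟩) v
    (mem_inter.mpr ⟨(G.mem_neighborFinset u v).mpr hvu.symm, mem_closedNbhd.mpr (Or.inr hxv)⟩)

theorem notMem_biUnion_closedNbhd (hg : 5 ≤ G.egirth) (hR : R ⊆ G.neighborFinset x)
    (hxv : G.Adj x v) (hvR : v ∉ R) {u : V} (hu : u ∈ (G.neighborFinset v).erase x) :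
    u ∉ (insert x R).biUnion G.closedNbhd := by
  obtain ⟨hux, hvu⟩ : u ≠ x ∧ G.Adj v u := by simpa using hu
  simp only [mem_biUnion, not_exists, not_and]
  intro w hw hwu
  have hwx := insert_subset_closedNbhd hR hw
  rcases mem_closedNbhd.mp hwu with rfl | hwu
  · rcases mem_closedNbhd.mp hwx with rfl | hxu
    · exact hux rfl
    · exact hxv.ne (eq_of_adj_of_mem_closedNbhd hg hxv hvu hux hxu.symm (self_mem_closedNbhd x))
  · obtain rfl := eq_of_adj_of_mem_closedNbhd hg hxv hvu hux hwu.symm hwx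
    rcases mem_insert.mp hw with rfl | hvR'
    · exact hxv.ne rfl
    · exact hvR hvR'

theorem exists_mem_closedNbhd_of_adj (hg : 5 ≤ G.egirth) (hxv : G.Adj x v) {u w : V}
    (hu : u ∈ (G.neighborFinset v).erase x) (hw : w ∈ (insert x R).biUnion G.closedNbhd)
    (huw : G.Adj u w) (hwv : w ≠ v) : ∃ w' ∈ R, w ∈ G.closedNbhd w' := by
  obtain ⟨hux, hvu⟩ : u ≠ x ∧ G.Adj v u := by simpa using hu
  obtain ⟨w', hw', hww'⟩ := mem_biUnion.mp hw
  rcases mem_insert.mp hw' with rfl | hw'R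
  · exact absurd (eq_of_adj_of_mem_closedNbhd hg hxv hvu hux huw hww') hwv
  · exact ⟨w', hw'R, hww'⟩

theorem card_compl_pair_inter_image_le (hg : 5 ≤ G.egirth) (hR : R ⊆ G.neighborFinset x)
    (hxv : G.Adj x v) (hvR : v ∉ R) {c : V → Fin (d + 1)} {u : V}
    (hu : u ∈ (G.neighborFinset v).erase x) :
    #({c x, c v}ᶜ ∩ (G.neighborFinset u ∩ (insert x R).biUnion G.closedNbhd).image c) ≤ #R := by
  have huR : ∀ w ∈ R, u ≠ w := fun w hw h => notMem_biUnion_closedNbhd hg hR hxv hvR hu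
    (h ▸ mem_biUnion.mpr ⟨w, mem_insert_of_mem hw, self_mem_closedNbhd w⟩)
  calc _ ≤ #(R.biUnion fun w => (G.neighborFinset u ∩ G.closedNbhd w).image c) := card_le_card ?_
    _ ≤ #R * 1 := card_biUnion_le_card_mul _ _ _ fun w hw =>
      card_image_le.trans (card_neighborFinset_inter_closedNbhd_le_one hg (huR w hw))
    _ = #R := mul_one _
  intro q hq
  simp only [mem_inter, mem_compl, mem_insert, mem_singleton, not_or, mem_image] at hq
  obtain ⟨⟨-, hqv⟩, w, ⟨huw, hw⟩, rfl⟩ := hq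
  obtain ⟨w', hw'R, hww'⟩ := exists_mem_closedNbhd_of_adj hg hxv hu hw
    ((G.mem_neighborFinset _ _).mp huw) (fun h => hqv (h ▸ rfl))
  exact mem_biUnion.mpr ⟨w', hw'R, mem_image_of_mem c (mem_inter.mpr ⟨huw, hww'⟩)⟩

theorem card_filter_adj_mem_closedNbhd_le_one (hg : 5 ≤ G.egirth) {k : ℕ} {c : V → Fin k}
    {w : V} {q : Fin k} (hinj : Set.InjOn c (G.closedNbhd w)) (hq : q ≠ c v) :
    #{u ∈ G.neighborFinset v | ∃ w' ∈ G.closedNbhd w, G.Adj u w' ∧ c w' = q} ≤ 1 := by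
  rw [card_le_one]
  simp only [mem_filter, mem_neighborFinset]
  rintro u₁ ⟨hvu₁, w₁, hw₁, hu₁w₁, rfl⟩ u₂ ⟨hvu₂, w₂, hw₂, hu₂w₂, hc⟩
  obtain rfl : w₂ = w₁ := hinj hw₂ hw₁ hc
  have hwv : w₂ ≠ v := fun h => hq (h ▸ rfl)
  exact card_le_one.mp (card_neighborFinset_inter_closedNbhd_le_one hg hwv) u₁
    (by simp [hu₁w₁.symm, hvu₁]) u₂ (by simp [hu₂w₂.symm, hvu₂])

theorem card_filter_mem_image_le (hg : 5 ≤ G.egirth) (hR : R ⊆ G.neighborFinset x)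
    (hxv : G.Adj x v) (hvR : v ∉ R) {c : V → Fin (d + 1)}
    (hinj : ∀ w ∈ R, Set.InjOn c (G.closedNbhd w)) {q : Fin (d + 1)} (hqv : q ≠ c v) :
    #{u ∈ (G.neighborFinset v).erase x |
      q ∈ (G.neighborFinset u ∩ (insert x R).biUnion G.closedNbhd).image c} ≤
      #{w ∈ R | c w ≠ q} := by
  calc _ ≤ #({w ∈ R | c w ≠ q}.biUnion fun w =>
        {u ∈ G.neighborFinset v | ∃ w' ∈ G.closedNbhd w, G.Adj u w' ∧ c w' = q}) :=
        card_le_card ?_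
    _ ≤ #{w ∈ R | c w ≠ q} * 1 := card_biUnion_le_card_mul _ _ _ fun w hw =>
      card_filter_adj_mem_closedNbhd_le_one hg (hinj w (mem_filter.mp hw).1) hqv
    _ = _ := mul_one _
  intro u hu'
  obtain ⟨hu, hq⟩ := mem_filter.mp hu'
  obtain ⟨w, hw, rfl⟩ := mem_image.mp hq
  obtain ⟨huw, hwD⟩ := mem_inter.mp hw
  rw [mem_neighborFinset] at huw
  obtain ⟨hux, hvu⟩ : u ≠ x ∧ G.Adj v u := by simpa using hu
  obtain ⟨w', hw'R, hww'⟩ := exists_mem_closedNbhd_of_adj hg hxv hu hwD huw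
    (fun h => hqv (h ▸ rfl))
  have hcw' : c w' ≠ c w := by
    intro h
    obtain rfl : w = w' := hinj w' hw'R hww' (self_mem_closedNbhd w') h.symm
    exact hvR (eq_of_adj_of_mem_closedNbhd hg hxv hvu hux huw
      (insert_subset_closedNbhd hR (mem_insert_of_mem hw'R)) ▸ hw'R)
  exact mem_biUnion.mpr ⟨w', mem_filter.mpr ⟨hw'R, hcw'⟩,
    mem_filter.mpr ⟨mem_of_mem_erase hu, w, hww', huw, rfl⟩⟩

theorem IsRainbowAround.exists_injective_avoiding (hreg : G.IsRegularOfDegree d)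
    (hg : 5 ≤ G.egirth) {c : V → Fin (d + 1)} (hc : IsRainbowAround G c (insert x R))
    (hR : R ⊆ G.neighborFinset x) (hxv : G.Adj x v) (hvR : v ∉ R) (hRd : 2 * #R ≤ d) :
    ∃ f : (G.neighborFinset v).erase x → Fin (d + 1), Function.Injective f ∧
      ∀ u : (G.neighborFinset v).erase x,
        f u ∈ {c x, c v}ᶜ \ (G.neighborFinset u ∩ (insert x R).biUnion G.closedNbhd).image c := by
  have hinj : ∀ w ∈ R, Set.InjOn c (G.closedNbhd w) := fun w hw => hc.1 w (mem_insert_of_mem hw)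
  have hcx := hc.1 x (mem_insert_self x R)
  have hRx : ∀ w ∈ R, w ∈ G.closedNbhd x := fun w hw =>
    insert_subset_closedNbhd hR (mem_insert_of_mem hw)
  have hvx : v ∈ G.closedNbhd x := mem_closedNbhd.mpr (Or.inr hxv)
  have hcxv : c x ≠ c v := hcx.ne (self_mem_closedNbhd x) hvx hxv.ne
  have hA : #((G.neighborFinset v).erase x) = d - 1 := by
    rw [card_erase_of_mem ((G.mem_neighborFinset _ _).mpr hxv.symm),
      card_neighborFinset_eq_degree, hreg v]
  have hP : #({c x, c v}ᶜ : Finset (Fin (d + 1))) = d - 1 := by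
    rw [card_compl, card_pair hcxv, Fintype.card_fin]
    omega
  have hKP : R.image c ⊆ {c x, c v}ᶜ := by
    refine image_subset_iff.mpr fun w hw => ?_
    simp only [mem_compl, mem_insert, mem_singleton, not_or]
    exact ⟨hcx.ne (hRx w hw) (self_mem_closedNbhd x) ((G.mem_neighborFinset _ _).mp (hR hw)).ne',
      hcx.ne (hRx w hw) hvx (ne_of_mem_of_not_mem hw hvR)⟩
  have hK : #R ≤ #(R.image c) := (card_image_of_injOn (hcx.mono fun w hw => hRx w hw)).ge
  have hqv : ∀ q ∈ ({c x, c v}ᶜ : Finset (Fin (d + 1))), q ≠ c v := fun q hq h => by simp [h] at hq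
  refine exists_injective_mem_sdiff_of_card_filter_le _ _ _ _ #R (by omega) (by omega) hKP hK
    (fun u hu => card_compl_pair_inter_image_le hg hR hxv hvR hu)
    (fun q hq => (card_filter_mem_image_le hg hR hxv hvR hinj (hqv q hq)).trans
      (card_filter_le _ _)) (forall_mem_image.mpr fun w hw => ?_)
  exact (card_filter_mem_image_le hg hR hxv hvR hinj (hqv _ (hKP (mem_image_of_mem c hw)))).trans_lt
    (card_lt_card (filter_ssubset.mpr ⟨w, hw, by simp⟩))

theorem IsRainbowAround.insert_of_injOn {k : ℕ} {c c' : V → Fin k}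
    (hc : IsRainbowAround G c (insert x R)) (hxv : G.Adj x v)
    (hA : ∀ u ∈ (G.neighborFinset v).erase x, u ∉ (insert x R).biUnion G.closedNbhd)
    (heq : Set.EqOn c' c ((insert x R).biUnion G.closedNbhd))
    (hinj : Set.InjOn c' ((G.neighborFinset v).erase x))
    (hmem : ∀ u ∈ (G.neighborFinset v).erase x,
      c' u ∈ {c x, c v}ᶜ \ (G.neighborFinset u ∩ (insert x R).biUnion G.closedNbhd).image c) :
    IsRainbowAround G c' (insert v (insert x R)) := by
  have hxD : x ∈ (insert x R).biUnion G.closedNbhd :=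
    mem_biUnion.mpr ⟨x, mem_insert_self x R, self_mem_closedNbhd x⟩
  have hvD : v ∈ (insert x R).biUnion G.closedNbhd :=
    mem_biUnion.mpr ⟨x, mem_insert_self x R, mem_closedNbhd.mpr (Or.inr hxv)⟩
  have hcxv : c x ≠ c v := (hc.1 x (mem_insert_self x R)).ne (self_mem_closedNbhd x)
    (mem_closedNbhd.mpr (Or.inr hxv)) hxv.ne
  have hN : (G.closedNbhd v : Set V) =
      insert v (insert x ((G.neighborFinset v).erase x : Set V)) := by
    rw [closedNbhd, ← insert_erase ((G.mem_neighborFinset _ _).mpr hxv.symm)]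
    simp
  have hpal : ∀ u ∈ (G.neighborFinset v).erase x, c' u ≠ c x ∧ c' u ≠ c v := fun u hu => by
    simpa using (mem_sdiff.mp (hmem u hu)).1
  refine hc.insert_of_eqOn heq ?_ fun a ha haD b hb hab => ?_
  · rw [hN, Set.injOn_insert (by simp [hxv.ne']), Set.injOn_insert (by simp)]
    refine ⟨⟨hinj, ?_⟩, ?_⟩
    · rintro ⟨a, ha, h⟩
      exact (hpal a ha).1 (h.trans (heq hxD))
    · rintro ⟨a, rfl | ha, h⟩
      · exact hcxv (by rw [← heq hxD, ← heq hvD, h])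
      · exact (hpal a ha).2 (h.trans (heq hvD))
  · have haA : a ∈ (G.neighborFinset v).erase x := by
      rcases mem_closedNbhd.mp ha with rfl | hva
      · exact absurd hvD haD
      · exact mem_erase.mpr ⟨(ne_of_mem_of_not_mem hxD haD).symm,
          (G.mem_neighborFinset _ _).mpr hva⟩
    rw [heq hb]
    intro h
    refine (mem_sdiff.mp (hmem a haA)).2 (mem_image.mpr ⟨b, mem_inter.mpr ⟨?_, hb⟩, h.symm⟩)
    exact (G.mem_neighborFinset _ _).mpr hab

theorem IsRainbowAround.exists_insert (hreg : G.IsRegularOfDegree d) (hg : 5 ≤ G.egirth)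
    {c : V → Fin (d + 1)} (hc : IsRainbowAround G c (insert x R)) (hR : R ⊆ G.neighborFinset x)
    (hxv : G.Adj x v) (hvR : v ∉ R) (hRd : 2 * #R ≤ d) :
    ∃ c' : V → Fin (d + 1), IsRainbowAround G c' (insert v (insert x R)) := by
  obtain ⟨f, hf, hfP⟩ := hc.exists_injective_avoiding hreg hg hR hxv hvR hRd
  have hA := fun u hu => notMem_biUnion_closedNbhd hg hR hxv hvR (u := u) hu
  refine ⟨fun w => if h : w ∈ (G.neighborFinset v).erase x then f ⟨w, h⟩ else c w,
    hc.insert_of_injOn hxv hA (fun w hw => dif_neg fun h => hA w h hw) ?_ fun u hu => ?_⟩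
  · intro a ha b hb h
    simp only [mem_coe] at ha hb
    simp only [dif_pos ha, dif_pos hb] at h
    exact congrArg Subtype.val (hf h)
  · simp only [dif_pos hu]
    exact hfP ⟨u, hu⟩

end Step

theorem exists_isRainbowAround (hreg : G.IsRegularOfDegree d) (hg : 5 ≤ G.egirth) {x : V}
    {R : Finset V} (hR : R ⊆ G.neighborFinset x) (hRd : #R ≤ d / 2 + 1) :
    ∃ c : V → Fin (d + 1), IsRainbowAround G c (insert x R) := by
  induction R using Finset.induction_on with
  | empty => simpa using exists_isRainbowAround_singleton hreg x
  | insert v R hvR ih =>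
    rw [card_insert_of_notMem hvR] at hRd
    obtain ⟨c, hc⟩ := ih ((subset_insert v R).trans hR) (by omega)
    rw [insert_comm]
    exact hc.exists_insert hreg hg ((subset_insert v R).trans hR)
      ((G.mem_neighborFinset _ _).mp (hR (mem_insert_self v R))) hvR (by omega)

end SimpleGraph

theorem exists_coloring_dominant_vertex_and_neighbors (G : SimpleGraph V)
    [DecidableRel G.Adj] (d : ℕ) (hreg : G.IsRegularOfDegree d) (hg : G.girth = 5) :
    ∃ (c : V → Fin (d + 1)) (x : V) (s : Finset V),
      ProperColoring G c ∧
      (∀ v ∈ s, G.Adj x v) ∧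
      s.card = ceilHalf (d - 1) + 1 ∧
      IsDominant G c x ∧ (∀ v ∈ s, IsDominant G c v) ∧
      Set.InjOn c (insert x (s : Set V)) := by
  have hg5 : 5 ≤ G.egirth := by
    have : (G.girth : ℕ∞) ≤ G.egirth := G.egirth.natCast_toNat_le_self
    rwa [hg] at this
  obtain ⟨x, y, hxy⟩ : ∃ x y, G.Adj x y := by
    by_contra! h
    have : G = ⊥ := by ext a b; simp [h a b]
    simp [this] at hg
  have hd : 1 ≤ d := hreg x ▸ (G.degree_pos_iff_exists_adj x).mpr ⟨y, hxy⟩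
  obtain ⟨s, hsx, hs⟩ := exists_subset_card_eq (s := G.neighborFinset x) (n := d / 2 + 1)
    (by rw [card_neighborFinset_eq_degree, hreg x]; omega)
  obtain ⟨c, hc⟩ := exists_isRainbowAround hreg hg5 hsx hs.le
  obtain ⟨c', hc', hinj⟩ := hc.exists_properColoring hreg
  have hdom : ∀ v ∈ insert x s, IsDominant G c' v := fun v hv =>
    isDominant_of_injOn_closedNbhd hreg (hinj v hv)
  refine ⟨c', x, s, hc', fun v hv => (G.mem_neighborFinset x v).mp (hsx hv), ?_,
    hdom x (mem_insert_self x s), fun v hv => hdom v (mem_insert_of_mem hv),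
    (hinj x (mem_insert_self x s)).mono ?_⟩
  · rw [hs, ceilHalf]
    omega
  · simpa using coe_subset.mpr (insert_subset_closedNbhd hsx)
end

section
/- Let G be a d-regular graph and let c be a proper (d+1)-coloring of G in which some color class contains no dominant vertex. Then there exists a proper d-coloring of G in which every vertex that was dominant in c remains dominant. -/
/-!
Recolor each vertex of the class `j`, which has no dominant vertex, with a color other than `j`
missing from its neighborhood. The new coloring is proper and avoids `j`, so it factors through
`j.succAbove : Fin d → Fin (d + 1)`. A dominant vertex lies outside class `j`, and its neighbors
of the colors other than `j` keep their colors, so it stays dominant.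
-/

open SimpleGraph

variable {V : Type*} [Fintype V] [DecidableEq V]

section

omit [Fintype V] [DecidableEq V]

variable {k : ℕ} {G : SimpleGraph V}

theorem exists_missing_color_of_not_isDominant {c : V → Fin k} {v : V}
    (h : ¬ IsDominant G c v) : ∃ i ≠ c v, ∀ u, G.Adj v u → c u ≠ i := by
  simpa [IsDominant] using h

theorem exists_properColoring_avoiding {c : V → Fin k} (hc : ProperColoring G c) {j : Fin k}
    (hj : ∀ v, c v = j → ¬ IsDominant G c v) :
    ∃ c₁ : V → Fin k, ProperColoring G c₁ ∧ (∀ v, c₁ v ≠ j) ∧ ∀ v, c v ≠ j → c₁ v = c v := by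
  classical
  have hmissing : ∀ v, ∃ i ≠ j, c v = j → ∀ u, G.Adj v u → c u ≠ i := by
    intro v
    by_cases hv : c v = j
    · obtain ⟨i, hi, hfree⟩ := exists_missing_color_of_not_isDominant (hj v hv)
      exact ⟨i, hv ▸ hi, fun _ => hfree⟩
    · exact ⟨c v, hv, fun h => absurd h hv⟩
  choose f hfj hfree using hmissing
  refine ⟨fun v => if c v = j then f v else c v, ?_, fun v => ?_, fun v hv => if_neg hv⟩
  · intro u v huv
    by_cases hu : c u = j <;> by_cases hv : c v = j <;> simp only [hu, hv, if_true, if_false]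
    · exact absurd (hu.trans hv.symm) (hc u v huv)
    · exact fun h => hfree u hu v huv h.symm
    · exact hfree v hv u huv.symm
    · exact hc u v huv
  · dsimp only
    split_ifs with hv
    · exact hfj v
    · exact hv

theorem ProperColoring.of_comp {m : ℕ} {c : V → Fin k} (f : Fin k → Fin m)
    (h : ProperColoring G (f ∘ c)) : ProperColoring G c :=
  fun u v huv hcuv => h u v huv (congrArg f hcuv)

theorem IsDominant.of_succAbove_eq {c : V → Fin (k + 1)} {c' : V → Fin k} {j : Fin (k + 1)}
    (hc' : ∀ u, c u ≠ j → j.succAbove (c' u) = c u) {v : V} (hv : IsDominant G c v)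
    (hvj : c v ≠ j) : IsDominant G c' v := by
  intro m hm
  have hmv : j.succAbove m ≠ c v := by
    rw [← hc' v hvj]
    exact fun h => hm (Fin.succAbove_right_inj.mp h)
  obtain ⟨u, hvu, hu⟩ := hv _ hmv
  refine ⟨u, hvu, (Fin.succAbove_right_inj (p := j)).mp ?_⟩
  rw [hc' u (hu ▸ Fin.succAbove_ne j m), hu]

end

theorem exists_d_coloring_preserving_dominant_general (G : SimpleGraph V)
    (d : ℕ)
    (c : V → Fin (d + 1)) (hc : ProperColoring G c)
    (hj : ∃ j : Fin (d + 1), ∀ v, c v = j → ¬ IsDominant G c v) :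
    ∃ c' : V → Fin d, ProperColoring G c' ∧
      ∀ v, IsDominant G c v → IsDominant G c' v := by
  obtain ⟨j, hj⟩ := hj
  obtain ⟨c₁, hc₁, hc₁j, hc₁c⟩ := exists_properColoring_avoiding hc hj
  choose c' hc' using fun v => Fin.exists_succAbove_eq (hc₁j v)
  have hc₁_eq : j.succAbove ∘ c' = c₁ := funext hc'
  refine ⟨c', ProperColoring.of_comp j.succAbove (hc₁_eq ▸ hc₁), fun v hv => ?_⟩
  have hvj : c v ≠ j := fun h => hj v h hv
  exact hv.of_succAbove_eq (fun u hu => (hc' u).trans (hc₁c u hu)) hvj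

theorem exists_d_coloring_preserving_dominant (G : SimpleGraph V)
    [DecidableRel G.Adj] (d : ℕ) (hreg : G.IsRegularOfDegree d)
    (c : V → Fin (d + 1)) (hc : ProperColoring G c)
    (hj : ∃ j : Fin (d + 1), ∀ v, c v = j → ¬ IsDominant G c v) :
    ∃ c' : V → Fin d, ProperColoring G c' ∧
      ∀ v, IsDominant G c v → IsDominant G c' v :=
  exists_d_coloring_preserving_dominant_general G d c hc hj
end
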